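/- Let T be a tree on a finite nonempty vertex type V with n = |V| vertices, and let m be an integer such that every vertex of T has degree at most m. Let G be the m-order V-fractal graph of T. Then the Wiener index of G satisfies W(G) = 3(m+1)^2·W(T) + (m−2)(m+1)·n^2 + (m+2)·n. -/

import Mathlib

/-!
Every vertex `x` of the fractal graph hangs at depth `height x ∈ {0, 1}` below an original vertex
`base x`, and for `x ≠ y` its distance to `y` is
`3 d_T(base x, base y) + height x + height y - 2 [x points to base y] - 2 [y points to base x]`,
where a midpoint vertex points to `w` if its dart leads towards `w`. This is checked by showing the
formula changes by at most one along edges and that it drops along some edge out of every `y ≠ x`;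
the only tree fact needed is that no edge of `T` other than `t h` itself crosses the cut of `t h`.
Summing, each original vertex carries exactly `m + 1` vertices of the fractal graph, there are
`m n` non-original vertices, and for each `w` exactly one dart of every edge points to `w`, so
these indicators add up to `n - 1`.
-/

open SimpleGraph Finset

/-- The Wiener index of a finite simple graph: half the sum of the graph
distances over all ordered pairs of vertices. -/
noncomputable def wienerIndex {V : Type*} [Fintype V] (G : SimpleGraph V) : ℚ :=
  (∑ u : V, ∑ v : V, (G.dist u v : ℚ)) / 2

/-- The `m`-order V-fractal graph of `T`: insert two midpoint vertices on every
edge of `T` (one for each dart) and attach `m - deg_T v` pendant leaves to every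
original vertex `v`, so that every original vertex gets degree exactly `m`. -/
def vFractal {V : Type*} [Fintype V] (T : SimpleGraph V) [DecidableRel T.Adj] (m : ℕ) :
    SimpleGraph (V ⊕ (T.Dart ⊕ (Σ v : V, Fin (m - T.degree v)))) :=
  SimpleGraph.fromRel (fun x y =>
    match x, y with
    | Sum.inl u, Sum.inr (Sum.inl d) => d.fst = u
    | Sum.inr (Sum.inl d), Sum.inr (Sum.inl d') => d' = d.symm
    | Sum.inl u, Sum.inr (Sum.inr p) => u = p.1
    | _, _ => False)

namespace SimpleGraph

variable {V : Type*} {G : SimpleGraph V}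

theorem Walk.dist_add_dist_of_mem_support {u v w : V} {p : G.Walk u v}
    (hp : p.length = G.dist u v) (hw : w ∈ p.support) :
    G.dist u w + G.dist w v = G.dist u v := by
  classical
  rw [← length_eq_dist_of_subwalk hp (p.isSubwalk_takeUntil hw),
    ← length_eq_dist_of_subwalk hp (p.isSubwalk_dropUntil hw), ← Walk.length_append,
    Walk.take_spec, hp]

theorem Reachable.exists_adj_dist_add_one_eq {u v : V} (hr : G.Reachable u v) (hne : u ≠ v) :
    ∃ w, G.Adj u w ∧ G.dist w v + 1 = G.dist u v := by
  obtain ⟨p, hp⟩ := hr.exists_walk_length_eq_dist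
  cases p with
  | nil => exact absurd rfl hne
  | @cons _ w _ hadj q =>
    refine ⟨w, hadj, le_antisymm ?_ ?_⟩
    · rw [← hp, Walk.length_cons]
      exact Nat.add_le_add_right (G.dist_le q) 1
    · obtain ⟨r, hr⟩ := q.reachable.exists_walk_length_eq_dist
      simpa [hr] using G.dist_le (Walk.cons hadj r)

theorem IsTree.eq_of_adj_of_dist_lt {t h a b : V} (hG : G.IsTree) (hth : G.Adj t h)
    (hab : G.Adj a b) (ha : G.dist a t < G.dist a h) (hb : G.dist b h < G.dist b t) :
    a = t ∧ b = h := by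
  obtain ⟨p, hp⟩ := hG.connected.exists_walk_length_eq_dist t a
  obtain ⟨q, hq⟩ := hG.connected.exists_walk_length_eq_dist b h
  have hbridge := isAcyclic_iff_forall_adj_isBridge.mp hG.isAcyclic hth
  -- the walk `t ⇝ a → b ⇝ h` crosses the bridge `t h`, which neither geodesic can contain
  have hmem := isBridge_iff_forall_walk_mem_edges.mp hbridge (p.append (q.cons hab))
  have hth' : G.dist t h = 1 := dist_eq_one_iff_adj.mpr hth
  rw [Walk.edges_append, Walk.edges_cons, List.mem_append, List.mem_cons] at hmem
  rcases hmem with hp' | he | hq'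
  · have := Walk.dist_add_dist_of_mem_support hp (p.snd_mem_support_of_mem_edges hp')
    rw [G.dist_comm (u := a), G.dist_comm (u := a)] at ha
    omega
  · rcases Sym2.eq_iff.mp he with ⟨rfl, rfl⟩ | ⟨rfl, rfl⟩
    · exact ⟨rfl, rfl⟩
    · simp at ha
  · have := Walk.dist_add_dist_of_mem_support hq (q.fst_mem_support_of_mem_edges hq')
    omega

theorem IsTree.card_filter_dist_snd_lt_dist_fst [Fintype V] [DecidableRel G.Adj]
    (hG : G.IsTree) (w : V) :
    #{d : G.Dart | G.dist w d.snd < G.dist w d.fst} = #G.edgeFinset := by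
  set f : G.Dart → ℕ := fun d => if G.dist w d.snd < G.dist w d.fst then 1 else 0
  have hpair (d : G.Dart) : f d + f d.symm = 1 := by
    rcases hG.dist_eq_dist_add_one_of_adj w d.adj with h | h <;> simp [f, h]
  have hsymm : ∑ d : G.Dart, f d.symm = ∑ d, f d :=
    Equiv.sum_comp (Function.Involutive.toPerm _ Dart.symm_involutive) f
  have htotal : ∑ d, f d + ∑ d : G.Dart, f d.symm = 2 * #G.edgeFinset := by
    rw [← sum_add_distrib, sum_congr rfl fun d _ => hpair d, sum_const, smul_eq_mul, mul_one,
      card_univ, dart_card_eq_twice_card_edges]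
  rw [card_filter]
  change ∑ d, f d = _
  omega

theorem le_add_length_of_forall_adj_le_add_one (g : V → ℤ)
    (hlip : ∀ ⦃y z⦄, G.Adj y z → g z ≤ g y + 1) {x y : V} (p : G.Walk x y) :
    g x ≤ g y + p.length := by
  induction p with
  | nil => simp
  | cons h q ih =>
    have := hlip h.symm
    rw [Walk.length_cons]
    push_cast
    omega

theorem dist_eq_of_lipschitz_of_exists_adj_lt [Finite V] {x : V} (g : V → ℤ) (hx : g x = 0)
    (hlip : ∀ ⦃y z⦄, G.Adj y z → g z ≤ g y + 1)
    (hdesc : ∀ y, y ≠ x → ∃ z, G.Adj y z ∧ g z < g y) (y : V) :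
    (G.dist x y : ℤ) = g y := by
  have hnonneg (y : V) : 0 ≤ g y := by
    have : Nonempty V := ⟨x⟩
    obtain ⟨y₀, hy₀⟩ := Finite.exists_min g
    by_cases h : y₀ = x
    · exact hx ▸ h ▸ hy₀ y
    · obtain ⟨z, -, hz⟩ := hdesc y₀ h
      exact absurd (hy₀ z) hz.not_ge
  have hwalk (n : ℕ) : ∀ y, g y = n → ∃ p : G.Walk x y, p.length ≤ n := by
    induction n using Nat.strong_induction_on with
    | _ n ih =>
      intro y hy
      by_cases h : y = x
      · subst h
        exact ⟨Walk.nil, by simp⟩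
      · obtain ⟨z, hyz, hz⟩ := hdesc y h
        have := hnonneg z
        obtain ⟨p, hp⟩ := ih (g z).toNat (by omega) z (by omega)
        refine ⟨p.concat hyz.symm, ?_⟩
        have := hlip hyz.symm
        rw [Walk.length_concat]
        omega
  obtain ⟨p, hp⟩ := hwalk (g y).toNat y (by have := hnonneg y; omega)
  obtain ⟨q, hq⟩ := p.reachable.exists_walk_length_eq_dist
  have := G.dist_le p
  have := le_add_length_of_forall_adj_le_add_one g hlip q.reverse
  rw [Walk.length_reverse, hq, hx] at this
  have := hnonneg y
  omega

end SimpleGraph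

namespace vFractal

variable {V : Type*} [Fintype V]

abbrev Vertex (T : SimpleGraph V) [DecidableRel T.Adj] (m : ℕ) : Type _ :=
  V ⊕ (T.Dart ⊕ (Σ v : V, Fin (m - T.degree v)))

variable {T : SimpleGraph V} [DecidableRel T.Adj] {m : ℕ}

def base : Vertex T m → V
  | .inl u => u
  | .inr (.inl d) => d.fst
  | .inr (.inr p) => p.1

def height : Vertex T m → ℤ
  | .inl _ => 0
  | .inr _ => 1

noncomputable def towards : Vertex T m → V → ℤ
  | .inr (.inl d), w => if T.dist w d.snd < T.dist w d.fst then 1 else 0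
  | _, _ => 0

/-- The route `x → base x ⇝ base y → y` has length `3 * dist + height x + height y`; a
midpoint vertex on a dart pointing towards the other base lies on that route instead of off it,
saving `2`. -/
noncomputable def distExpr (x y : Vertex T m) : ℤ :=
  3 * T.dist (base x) (base y) + height x + height y
    - 2 * towards x (base y) - 2 * towards y (base x)

open Classical in
noncomputable def distFormula (x y : Vertex T m) : ℤ :=
  if x = y then 0 else distExpr x y

theorem towards_base_self (x : Vertex T m) : towards x (base x) = 0 := by
  rcases x with u | d | p <;> simp [towards, base]

@[simp]
theorem towards_inl (u : V) (w : V) : towards (.inl u : Vertex T m) w = 0 :=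
  rfl

@[simp]
theorem towards_leaf (p : Σ v : V, Fin (m - T.degree v)) (w : V) :
    towards (.inr (.inr p) : Vertex T m) w = 0 :=
  rfl

theorem towards_dart (d : T.Dart) (w : V) :
    towards (.inr (.inl d) : Vertex T m) w = if T.dist w d.snd < T.dist w d.fst then 1 else 0 :=
  rfl

theorem distFormula_self (x : Vertex T m) : distFormula x x = 0 := if_pos rfl

theorem distFormula_of_ne {x y : Vertex T m} (h : x ≠ y) : distFormula x y = distExpr x y :=
  if_neg h

theorem distFormula_inl (x : Vertex T m) (w : V) :
    distFormula x (.inl w) = 3 * T.dist (base x) w + height x - 2 * towards x w := by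
  by_cases h : x = .inl w
  · subst h
    simp [distFormula_self, base, height, towards]
  · simp [distFormula_of_ne h, distExpr, base, height, towards]

theorem distFormula_leaf {x : Vertex T m} {p : Σ v : V, Fin (m - T.degree v)}
    (h : x ≠ .inr (.inr p)) :
    distFormula x (.inr (.inr p)) =
      3 * T.dist (base x) p.1 + height x + 1 - 2 * towards x p.1 := by
  simp [distFormula_of_ne h, distExpr, base, height, towards]

theorem distFormula_dart {x : Vertex T m} {d : T.Dart} (h : x ≠ .inr (.inl d)) :
    distFormula x (.inr (.inl d)) = 3 * T.dist (base x) d.fst + height x + 1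
      - 2 * towards x d.fst
      - 2 * if T.dist (base x) d.snd < T.dist (base x) d.fst then 1 else 0 := by
  rw [distFormula_of_ne h, distExpr, towards_dart]
  simp only [base, height]

theorem distFormula_dart_symm (d : T.Dart) :
    distFormula (.inr (.inl d) : Vertex T m) (.inr (.inl d.symm)) = 1 := by
  rw [distFormula_dart (by simpa using d.symm_ne.symm)]
  simp [towards_dart, base, height, dist_eq_one_iff_adj.mpr d.adj,
    dist_eq_one_iff_adj.mpr d.adj.symm]

theorem towards_fst_eq_towards_snd (hT : T.IsTree) {x : Vertex T m} {d : T.Dart}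
    (h₁ : x ≠ .inr (.inl d)) (h₂ : x ≠ .inr (.inl d.symm)) :
    towards x d.fst = towards x d.snd := by
  rcases x with u | e | p
  · rfl
  · have hd : ¬ (d.fst = e.fst ∧ d.snd = e.snd) := fun h =>
      h₁ (congrArg _ (congrArg _ (Dart.ext _ _ (Prod.ext h.1.symm h.2.symm))))
    have hd' : ¬ (d.snd = e.fst ∧ d.fst = e.snd) := fun h =>
      h₂ (congrArg _ (congrArg _ (Dart.ext _ _ (Prod.ext h.1.symm h.2.symm))))
    -- only the edge of `e` itself joins the two sides of `e`
    have cross := fun ha hb => hd (hT.eq_of_adj_of_dist_lt e.adj d.adj ha hb)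
    have cross' := fun ha hb => hd' (hT.eq_of_adj_of_dist_lt e.adj d.adj.symm ha hb)
    rcases hT.dist_eq_dist_add_one_of_adj d.fst e.adj with h | h <;>
    rcases hT.dist_eq_dist_add_one_of_adj d.snd e.adj with h' | h' <;>
    simp only [towards_dart] <;> split_ifs <;>
    first
      | rfl
      | omega
      | exact (cross (by omega) (by omega)).elim
      | exact (cross' (by omega) (by omega)).elim
  · rfl

theorem adj_inl_dart (d : T.Dart) : (vFractal T m).Adj (.inl d.fst) (.inr (.inl d)) :=
  (fromRel_adj _ _ _).mpr ⟨by simp, .inl rfl⟩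

theorem adj_dart_symm (d : T.Dart) :
    (vFractal T m).Adj (.inr (.inl d)) (.inr (.inl d.symm)) :=
  (fromRel_adj _ _ _).mpr ⟨by simpa using d.symm_ne.symm, .inl rfl⟩

theorem adj_inl_leaf (p : Σ v : V, Fin (m - T.degree v)) :
    (vFractal T m).Adj (.inl p.1) (.inr (.inr p)) :=
  (fromRel_adj _ _ _).mpr ⟨by simp, .inl rfl⟩

theorem adj_induction {P : Vertex T m → Vertex T m → Prop} (hP : ∀ y z, P y z → P z y)
    (hdart : ∀ d : T.Dart, P (.inl d.fst) (.inr (.inl d)))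
    (hsymm : ∀ d : T.Dart, P (.inr (.inl d)) (.inr (.inl d.symm)))
    (hleaf : ∀ p : Σ v : V, Fin (m - T.degree v), P (.inl p.1) (.inr (.inr p)))
    {y z : Vertex T m} (h : (vFractal T m).Adj y z) : P y z := by
  obtain ⟨-, h | h⟩ := (fromRel_adj _ _ _).mp h <;>
  rcases y with u | d | p <;> rcases z with u' | d' | p' <;> simp only at h <;>
  first
    | exact h.elim
    | (subst h; first
        | exact hdart _ | exact hP _ _ (hdart _) | exact hsymm _ | exact hP _ _ (hsymm _)
        | exact hleaf _ | exact hP _ _ (hleaf _))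

theorem abs_distFormula_sub_le_one (hT : T.IsTree) (x : Vertex T m) {y z : Vertex T m}
    (h : (vFractal T m).Adj y z) : |distFormula x y - distFormula x z| ≤ 1 := by
  refine adj_induction (P := fun y z => |distFormula x y - distFormula x z| ≤ 1)
    (fun y z h => by rwa [abs_sub_comm]) (fun d => ?_) (fun d => ?_) (fun p => ?_) h
  · by_cases hx : x = .inr (.inl d)
    · subst hx
      simp [distFormula_inl, distFormula_self, towards_dart, base, height]
    · rw [distFormula_inl, distFormula_dart hx, abs_le]
      split_ifs <;> constructor <;> linarith
  · by_cases h₁ : x = .inr (.inl d)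
    · subst h₁
      simp [distFormula_self, distFormula_dart_symm]
    by_cases h₂ : x = .inr (.inl d.symm)
    · subst h₂
      rw [distFormula_self, (by simpa using distFormula_dart_symm (m := m) d.symm :
        distFormula _ _ = 1)]
      norm_num
    rw [distFormula_dart h₁, distFormula_dart h₂, towards_fst_eq_towards_snd hT h₁ h₂,
      abs_le]
    simp only [Dart.symm_toProd, Prod.fst_swap, Prod.snd_swap]
    rcases hT.dist_eq_dist_add_one_of_adj (base x) d.adj with hd | hd <;>
      split_ifs <;> constructor <;> omega
  · by_cases hx : x = .inr (.inr p)
    · subst hx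
      simp [distFormula_inl, distFormula_self, base, height]
    · rw [distFormula_inl, distFormula_leaf hx]
      simp

theorem exists_adj_distFormula_lt (hT : T.IsTree) {x y : Vertex T m} (hxy : x ≠ y) :
    ∃ z, (vFractal T m).Adj y z ∧ distFormula x z < distFormula x y := by
  rcases y with u | d | p
  · by_cases hu : base x = u
    · rcases x with v | e | q
      · exact absurd (congrArg _ hu) hxy
      · subst hu
        exact ⟨_, adj_inl_dart e, by simp [distFormula_self, distFormula_inl, base, height,
          towards_dart]⟩
      · subst hu
        exact ⟨_, adj_inl_leaf q, by simp [distFormula_self, distFormula_inl, base, height]⟩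
    · obtain ⟨w, huw, hw⟩ := (hT.connected u (base x)).exists_adj_dist_add_one_eq (Ne.symm hu)
      have hx : x ≠ .inr (.inl ⟨(u, w), huw⟩) := fun h => hu (by subst h; rfl)
      refine ⟨_, adj_inl_dart ⟨(u, w), huw⟩, ?_⟩
      rw [distFormula_dart hx, distFormula_inl, dist_comm (u := base x), dist_comm (u := base x)]
      simp only
      rw [if_pos (by omega)]
      linarith
  · by_cases hd : T.dist (base x) d.snd < T.dist (base x) d.fst
    · refine ⟨_, adj_dart_symm d, ?_⟩
      by_cases h₂ : x = .inr (.inl d.symm)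
      · subst h₂
        rw [distFormula_self, (by simpa using distFormula_dart_symm (m := m) d.symm :
          distFormula _ _ = 1)]
        norm_num
      · rw [distFormula_dart hxy, distFormula_dart h₂, towards_fst_eq_towards_snd hT hxy h₂]
        simp only [Dart.symm_toProd, Prod.fst_swap, Prod.snd_swap]
        rw [if_pos hd, if_neg (by omega)]
        rcases hT.dist_eq_dist_add_one_of_adj (base x) d.adj with h | h <;> omega
    · refine ⟨_, (adj_inl_dart d).symm, ?_⟩
      rw [distFormula_inl, distFormula_dart hxy, if_neg hd]
      linarith
  · refine ⟨_, (adj_inl_leaf p).symm, ?_⟩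
    rw [distFormula_inl, distFormula_leaf hxy]
    linarith

theorem dist_eq_distFormula (hT : T.IsTree) (x y : Vertex T m) :
    ((vFractal T m).dist x y : ℤ) = distFormula x y :=
  dist_eq_of_lipschitz_of_exists_adj_lt (distFormula x) (distFormula_self x)
    (fun _ _ h => by linarith [(abs_le.mp (abs_distFormula_sub_le_one hT x h)).1])
    (fun _ hy => exists_adj_distFormula_lt hT (Ne.symm hy)) y

theorem sum_base (hdeg : ∀ v, T.degree v ≤ m) {M : Type*} [AddCommMonoid M] (g : V → M) :
    ∑ x : Vertex T m, g (base x) = (m + 1) • ∑ v, g v := by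
  classical
  have hdart : ∑ d : T.Dart, g d.fst = ∑ v, T.degree v • g v := by
    rw [← sum_fiberwise' univ (fun d : T.Dart => d.fst) g]
    refine sum_congr rfl fun v _ => ?_
    rw [sum_const]
    congr 1
    convert T.dart_fst_fiber_card_eq_degree v
  have hleaf : ∑ p : Σ v : V, Fin (m - T.degree v), g p.1 = ∑ v, (m - T.degree v) • g v := by
    simp [Fintype.sum_sigma]
  rw [Fintype.sum_sum_type, Fintype.sum_sum_type]
  simp only [base]
  rw [hdart, hleaf, smul_sum, ← sum_add_distrib, ← sum_add_distrib]
  refine sum_congr rfl fun v _ => ?_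
  rw [show m + 1 = 1 + T.degree v + (m - T.degree v) by have := hdeg v; omega,
    add_smul, add_smul, one_smul, add_assoc]

theorem sum_height (hdeg : ∀ v, T.degree v ≤ m) :
    ∑ x : Vertex T m, height x = m * Fintype.card V := by
  rw [Fintype.sum_sum_type, Fintype.sum_sum_type]
  simp only [height, sum_const_zero, sum_const, card_univ, Fintype.card_sigma,
    dart_card_eq_sum_degrees, Fintype.card_fin, zero_add, nsmul_eq_mul, mul_one]
  push_cast [Nat.cast_sub (hdeg _)]
  simp [mul_comm]

theorem sum_towards (hT : T.IsTree) (w : V) :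
    ∑ x : Vertex T m, towards x w = Fintype.card V - 1 := by
  rw [Fintype.sum_sum_type, Fintype.sum_sum_type]
  simp only [towards_inl, towards_leaf, towards_dart, sum_const_zero, zero_add, add_zero]
  rw [sum_boole, hT.card_filter_dist_snd_lt_dist_fst, ← hT.card_edgeFinset]
  push_cast
  ring

theorem card_vertex (hdeg : ∀ v, T.degree v ≤ m) :
    Fintype.card (Vertex T m) = (m + 1) * Fintype.card V := by
  rw [Fintype.card_eq_sum_ones, Fintype.card_eq_sum_ones (α := V), ← smul_eq_mul]
  exact sum_base hdeg fun _ => 1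

theorem distFormula_eq_distExpr_sub [DecidableEq (Vertex T m)] (x y : Vertex T m) :
    distFormula x y = distExpr x y - if x = y then 2 * height x else 0 := by
  by_cases h : x = y
  · subst h
    simp only [distFormula_self, distExpr, SimpleGraph.dist_self, CharP.cast_eq_zero, mul_zero,
      zero_add, towards_base_self, sub_zero, if_true]
    ring
  · simp [distFormula_of_ne h, h]

theorem sum_distExpr (hT : T.IsTree) (hdeg : ∀ v, T.degree v ≤ m) (x : Vertex T m) :
    ∑ y, distExpr x y = 3 * (m + 1) * ∑ v, (T.dist (base x) v : ℤ)
      + (m + 1) * Fintype.card V * height x + m * Fintype.card V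
      - 2 * (m + 1) * ∑ v, towards x v - 2 * (Fintype.card V - 1) := by
  simp only [distExpr, sum_add_distrib, sum_sub_distrib, ← mul_sum, sum_const, card_univ,
    sum_base hdeg (fun v => (T.dist (base x) v : ℤ)), sum_base hdeg (towards x),
    sum_height hdeg, sum_towards hT, card_vertex hdeg]
  ring

theorem sum_sum_distFormula (hT : T.IsTree) (hdeg : ∀ v, T.degree v ≤ m) :
    ∑ x : Vertex T m, ∑ y, distFormula x y
      = 3 * (m + 1) ^ 2 * ∑ u, ∑ v, (T.dist u v : ℤ)
        + 2 * (m + 1) * m * Fintype.card V ^ 2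
        - 4 * (m + 1) * Fintype.card V * (Fintype.card V - 1) - 2 * m * Fintype.card V := by
  classical
  simp only [distFormula_eq_distExpr_sub, sum_sub_distrib, sum_ite_eq, mem_univ, if_true,
    sum_distExpr hT hdeg, sum_add_distrib, ← mul_sum, sum_const, card_univ, card_vertex hdeg,
    sum_base hdeg (fun u => ∑ v, (T.dist u v : ℤ)), sum_height hdeg]
  rw [sum_comm (f := fun x v => towards x v)]
  simp only [sum_towards hT, sum_const, card_univ]
  ring

end vFractal

theorem wiener_vFractal_general {V : Type*} [Fintype V]
    (T : SimpleGraph V) [DecidableRel T.Adj] (hT : T.IsTree)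
    (m : ℕ) (hdeg : ∀ v : V, T.degree v ≤ m) :
    wienerIndex (vFractal T m) =
      3 * ((m : ℚ) + 1) ^ 2 * wienerIndex T
        + ((m : ℚ) - 2) * ((m : ℚ) + 1) * (Fintype.card V : ℚ) ^ 2
        + ((m : ℚ) + 2) * (Fintype.card V : ℚ) := by
  have hsum := vFractal.sum_sum_distFormula hT hdeg
  simp only [← vFractal.dist_eq_distFormula hT] at hsum
  have hsumℚ := congrArg (Int.cast : ℤ → ℚ) hsum
  push_cast at hsumℚ
  rw [wienerIndex, wienerIndex, hsumℚ]
  ring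

theorem wiener_vFractal {V : Type*} [Fintype V] [DecidableEq V] [Nonempty V]
    (T : SimpleGraph V) [DecidableRel T.Adj] (hT : T.IsTree)
    (m : ℕ) (hdeg : ∀ v : V, T.degree v ≤ m) :
    wienerIndex (vFractal T m) =
      3 * ((m : ℚ) + 1) ^ 2 * wienerIndex T
        + ((m : ℚ) - 2) * ((m : ℚ) + 1) * (Fintype.card V : ℚ) ^ 2
        + ((m : ℚ) + 2) * (Fintype.card V : ℚ) :=
  wiener_vFractal_general T hT m hdeg
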